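/- (Efficiency of the Shapley value.) For every finite set D and every function v : Finset α → ℝ with v(∅) = 0, the Shapley values of the elements of D sum to the total value: Σ_{f ∈ D} Shapley(D,v,f) = v(D). -/

import Mathlib

open scoped BigOperators

variable {α : Type*} [DecidableEq α]

/-- The Shapley value of `f` in the cooperative game `v` over the set of players `D`. -/
noncomputable def Shapley (D : Finset α) (v : Finset α → ℝ) (f : α) : ℝ :=
  ∑ B ∈ (D \ {f}).powerset,
    ((B.card.factorial * (D.card - B.card - 1).factorial : ℕ) : ℝ) / (D.card.factorial : ℝ) *
      (v (B ∪ {f}) - v B)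

/-!
Regroup the sum of all Shapley values by coalitions `S ⊆ D`: the value `v S` enters positively
once for every `f ∈ S` (as `B ∪ {f}` with `B = S \ {f}`) and negatively once for every
`f ∈ D \ S` (as `B = S`). With `n = |D|` and `k = |S|`, both multiplicities times their weights
equal `1 / (n choose k)`, so every coalition other than `∅` and `D` cancels; `D` contributes
`v D` and `∅` contributes `-v ∅ = 0`.
-/

open Finset Nat

namespace Finset

variable {M : Type*} [AddCommMonoid M]

theorem sum_powerset_erase_eq_sum_filter_mem {D : Finset α} {f : α} (hf : f ∈ D)
    (g : Finset α → M) :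
    ∑ B ∈ (D.erase f).powerset, g B = ∑ S ∈ D.powerset with f ∈ S, g (S.erase f) := by
  refine sum_nbij' (insert f) (·.erase f) ?_ ?_ ?_ ?_ ?_ <;>
    intro S hS <;> simp only [mem_filter, mem_powerset, subset_erase] at hS ⊢
  · exact ⟨insert_subset hf hS.1, mem_insert_self f S⟩
  · exact ⟨(erase_subset f S).trans hS.1, notMem_erase f S⟩
  · exact erase_insert hS.2
  · exact insert_erase hS.2
  · rw [erase_insert hS.2]

theorem sum_sum_powerset_erase_eq_sum_sum_erase (D : Finset α) (g : α → Finset α → M) :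
    ∑ f ∈ D, ∑ B ∈ (D.erase f).powerset, g f B = ∑ S ∈ D.powerset, ∑ f ∈ S, g f (S.erase f) :=
  calc ∑ f ∈ D, ∑ B ∈ (D.erase f).powerset, g f B
      = ∑ f ∈ D, ∑ S ∈ D.powerset with f ∈ S, g f (S.erase f) :=
        sum_congr rfl fun _ hf => sum_powerset_erase_eq_sum_filter_mem hf _
    _ = ∑ S ∈ D.powerset, ∑ f ∈ S, g f (S.erase f) := sum_comm' fun f S => by
        simp only [mem_filter, mem_powerset]
        exact ⟨fun h => ⟨h.2.2, h.2.1⟩, fun h => ⟨h.2 h.1, h.2, h.1⟩⟩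

theorem sum_sum_powerset_erase_eq_sum_sum_sdiff (D : Finset α) (g : α → Finset α → M) :
    ∑ f ∈ D, ∑ B ∈ (D.erase f).powerset, g f B = ∑ S ∈ D.powerset, ∑ f ∈ D \ S, g f S :=
  sum_comm' fun f B => by
    simp only [mem_powerset, mem_sdiff, subset_erase]
    tauto

end Finset

noncomputable def shapleyWeight (n k : ℕ) : ℝ := ((k ! * (n - k - 1)! : ℕ) : ℝ) / n !

theorem natCast_mul_shapleyWeight_pred {n k : ℕ} (hk : 0 < k) (hkn : k ≤ n) :
    k * shapleyWeight n (k - 1) = ((n.choose k : ℕ) : ℝ)⁻¹ := by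
  have hfac : k * (k - 1)! = k ! := mul_factorial_pred hk.ne'
  have hsub : n - (k - 1) - 1 = n - k := by omega
  rw [shapleyWeight, cast_choose ℝ hkn, inv_div, hsub, ← hfac]
  push_cast
  ring

theorem natCast_sub_mul_shapleyWeight {n k : ℕ} (hkn : k < n) :
    ((n - k : ℕ) : ℝ) * shapleyWeight n k = ((n.choose k : ℕ) : ℝ)⁻¹ := by
  have hfac : (n - k) * (n - k - 1)! = (n - k)! := mul_factorial_pred (by omega)
  rw [shapleyWeight, cast_choose ℝ hkn.le, inv_div, ← hfac]
  push_cast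
  ring

theorem sum_shapley_eq_sum_powerset (D : Finset α) (v : Finset α → ℝ) :
    ∑ f ∈ D, Shapley D v f = ∑ S ∈ D.powerset,
      (S.card * shapleyWeight D.card (S.card - 1) -
        ((D.card - S.card : ℕ) : ℝ) * shapleyWeight D.card S.card) * v S :=
  calc ∑ f ∈ D, Shapley D v f
      = ∑ f ∈ D, ∑ B ∈ (D.erase f).powerset, shapleyWeight D.card B.card * v (insert f B)
        - ∑ f ∈ D, ∑ B ∈ (D.erase f).powerset, shapleyWeight D.card B.card * v B := by
        simp only [Shapley, ← sum_sub_distrib, mul_sub, sdiff_singleton_eq_erase,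
          union_singleton]
        rfl
    _ = _ := by
        rw [sum_sum_powerset_erase_eq_sum_sum_erase, sum_sum_powerset_erase_eq_sum_sum_sdiff,
          ← sum_sub_distrib]
        refine sum_congr rfl fun S hS => ?_
        rw [sum_congr rfl fun f hf => by rw [insert_erase hf, card_erase_of_mem hf], sum_const,
          sum_const, card_sdiff_of_subset (mem_powerset.1 hS), nsmul_eq_mul, nsmul_eq_mul]
        ring

theorem shapley_efficiency (D : Finset α) (v : Finset α → ℝ) (h0 : v ∅ = 0) :
    ∑ f ∈ D, Shapley D v f = v D := by
  rcases D.eq_empty_or_nonempty with rfl | hD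
  · simp [h0]
  rw [sum_shapley_eq_sum_powerset, sum_eq_single_of_mem D (mem_powerset_self D)]
  · rw [natCast_mul_shapleyWeight_pred hD.card_pos le_rfl, Nat.sub_self, choose_self]
    simp
  intro S hS hSD
  rcases S.eq_empty_or_nonempty with rfl | hS₀
  · simp [h0]
  have hlt : S.card < D.card := card_lt_card (ssubset_of_subset_of_ne (mem_powerset.1 hS) hSD)
  rw [natCast_mul_shapleyWeight_pred hS₀.card_pos hlt.le, natCast_sub_mul_shapleyWeight hlt,
    sub_self, zero_mul]
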